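/- The alternative recurrence H_{n+1}(x,s,q) = q^n x H_n(x/q, s, q) − q^n [n]_q s H_{n−1}(x/q, s, q) holds for the q-Hermite polynomials. -/

import Mathlib

noncomputable section

/-- The q-integer `[n]_q = (1 - q^n)/(1 - q)`. -/
def qnat (q : ℝ) (n : ℕ) : ℝ := (1 - q ^ n) / (1 - q)

/-- The q-factorial `[n]_q!`. -/
def qfac (q : ℝ) (n : ℕ) : ℝ := ∏ j ∈ Finset.range n, qnat q (j + 1)

/-- The Gaussian binomial coefficient. -/
def qbinom (q : ℝ) (n k : ℕ) : ℝ := qfac q n / (qfac q k * qfac q (n - k))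

/-- The odd q-double factorial `[2k-1]_q!! = [1]_q [3]_q ⋯ [2k-1]_q`. -/
def qdf (q : ℝ) (k : ℕ) : ℝ := ∏ i ∈ Finset.range k, qnat q (2 * i + 1)

/-- The bivariate q-Hermite polynomial
`H n (x,s,q) = ∑_{2k ≤ n} (-s)^k q^(k²) qbinom(n,2k) [2k-1]_q!! x^(n-2k)`. -/
def qHermite (q s : ℝ) (n : ℕ) (x : ℝ) : ℝ :=
  ∑ k ∈ Finset.range (n / 2 + 1),
    (-s) ^ k * q ^ (k ^ 2) * qbinom q n (2 * k) * qdf q k * x ^ (n - 2 * k)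

end

/-!
Compare the coefficients of `x ^ (n + 1 - 2k)`. The first term on the right contributes
`q ^ (2k)` times the `k`-th coefficient of `H_n`, the second one `-q ^ (2k - 1) [n]_q s` times the
`(k - 1)`-st coefficient of `H_{n-1}`. The absorption identity
`[n]_q qbinom(n - 1, 2k - 2) = [2k - 1]_q qbinom(n, 2k - 1)` turns the latter into the
`qbinom(n, 2k - 1)` part of the q-Pascal rule
`qbinom(n + 1, 2k) = q ^ (2k) qbinom(n, 2k) + qbinom(n, 2k - 1)`, and the two add up to the
`k`-th coefficient of `H_{n+1}`.
-/

open Finset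

section

variable {q : ℝ}

lemma qnat_zero : qnat q 0 = 0 := by simp [qnat]

lemma qnat_add (a b : ℕ) : qnat q (a + b) = qnat q a + q ^ a * qnat q b := by
  simp only [qnat, pow_add]
  ring

lemma qnat_succ_pos (hq0 : 0 ≤ q) (hq1 : q < 1) (n : ℕ) : 0 < qnat q (n + 1) :=
  div_pos (by linarith [pow_lt_one₀ hq0 hq1 n.add_one_ne_zero]) (by linarith)

lemma qfac_zero : qfac q 0 = 1 := prod_range_zero _

lemma qfac_succ (n : ℕ) : qfac q (n + 1) = qfac q n * qnat q (n + 1) := prod_range_succ _ _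

lemma qfac_ne_zero (hq : ∀ n, qnat q (n + 1) ≠ 0) (n : ℕ) : qfac q n ≠ 0 :=
  prod_ne_zero_iff.mpr fun j _ => hq j

lemma qdf_zero : qdf q 0 = 1 := prod_range_zero _

lemma qdf_succ (k : ℕ) : qdf q (k + 1) = qdf q k * qnat q (2 * k + 1) := prod_range_succ _ _

lemma qbinom_zero_right (hq : ∀ n, qnat q (n + 1) ≠ 0) (n : ℕ) : qbinom q n 0 = 1 := by
  rw [qbinom, Nat.sub_zero, qfac_zero, one_mul, div_self (qfac_ne_zero hq n)]

lemma qbinom_self (hq : ∀ n, qnat q (n + 1) ≠ 0) (n : ℕ) : qbinom q n n = 1 := by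
  rw [qbinom, Nat.sub_self, qfac_zero, mul_one, div_self (qfac_ne_zero hq n)]

lemma qbinom_succ_succ_mul_qnat (hq : ∀ n, qnat q (n + 1) ≠ 0) (n k : ℕ) :
    qbinom q (n + 1) (k + 1) * qnat q (k + 1) = qnat q (n + 1) * qbinom q n k := by
  rw [qbinom, qbinom, Nat.add_sub_add_right, qfac_succ, qfac_succ]
  field_simp [qfac_ne_zero hq k, qfac_ne_zero hq (n - k), hq k]

-- `[n + 1]_q = [k + 1]_q + q ^ (k + 1) [n - k]_q`, multiplied by `[n]_q! / ([k + 1]_q! [n - k]_q!)`.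
lemma qbinom_succ_succ (hq : ∀ n, qnat q (n + 1) ≠ 0) {n k : ℕ} (hk : k < n) :
    qbinom q (n + 1) (k + 1) = q ^ (k + 1) * qbinom q n (k + 1) + qbinom q n k := by
  obtain ⟨d, rfl⟩ := Nat.exists_eq_add_of_lt hk
  simp only [qbinom, show k + d + 1 + 1 - (k + 1) = d + 1 by omega,
    show k + d + 1 - (k + 1) = d by omega, show k + d + 1 - k = d + 1 by omega]
  rw [qfac_succ (k + d + 1), qfac_succ k, qfac_succ d,
    show k + d + 1 + 1 = (k + 1) + (d + 1) by ring, qnat_add]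
  field_simp [qfac_ne_zero hq k, qfac_ne_zero hq d, qfac_ne_zero hq (k + d + 1), hq k, hq d]
  ring

/-- The coefficient of `x ^ (n - 2k)` in `qHermite q s n x`. It is set to `0` for `2k > n`, where
`qbinom q n (2k)` does not vanish, so that sums over different ranges compare termwise. -/
noncomputable def qHermiteCoeff (q s : ℝ) (n k : ℕ) : ℝ :=
  if 2 * k ≤ n then (-s) ^ k * q ^ (k ^ 2) * qbinom q n (2 * k) * qdf q k else 0

lemma qHermiteCoeff_zero_right (hq : ∀ n, qnat q (n + 1) ≠ 0) (s : ℝ) (n : ℕ) :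
    qHermiteCoeff q s n 0 = 1 := by
  simp [qHermiteCoeff, qbinom_zero_right hq, qdf_zero]

lemma qHermiteCoeff_succ_succ (hq : ∀ n, qnat q (n + 1) ≠ 0) (s : ℝ) (m k : ℕ) :
    qHermiteCoeff q s (m + 2) (k + 1) =
      q ^ (2 * k + 2) * qHermiteCoeff q s (m + 1) (k + 1)
        - q ^ (2 * k + 1) * qnat q (m + 1) * s * qHermiteCoeff q s m k := by
  have hsq : q ^ ((k + 1) ^ 2) = q ^ (k ^ 2) * q ^ (2 * k + 1) := by rw [← pow_add]; ring_nf
  have habsorb := qbinom_succ_succ_mul_qnat hq m (2 * k)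
  unfold qHermiteCoeff
  rcases lt_trichotomy (2 * k) m with hlt | rfl | hgt
  · have hpascal : qbinom q (m + 2) (2 * (k + 1)) =
        q ^ (2 * k + 2) * qbinom q (m + 1) (2 * (k + 1)) + qbinom q (m + 1) (2 * k + 1) := by
      rw [show 2 * (k + 1) = 2 * k + 1 + 1 by ring]
      exact qbinom_succ_succ hq (by omega)
    rw [if_pos (by omega), if_pos (by omega), if_pos hlt.le, hpascal, qdf_succ, hsq]
    linear_combination (-s) ^ k * (-s) * q ^ (k ^ 2) * q ^ (2 * k + 1) * qdf q k * habsorb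
  · have htop : qbinom q (2 * k + 2) (2 * (k + 1)) = 1 := qbinom_self hq _
    rw [if_pos (show 2 * (k + 1) ≤ 2 * k + 2 by omega),
      if_neg (show ¬2 * (k + 1) ≤ 2 * k + 1 by omega), if_pos le_rfl, htop, qdf_succ, hsq,
      qbinom_self hq]
    rw [qbinom_self hq, qbinom_self hq] at habsorb
    linear_combination (-s) ^ k * (-s) * q ^ (k ^ 2) * q ^ (2 * k + 1) * qdf q k * habsorb
  · rw [if_neg (by omega), if_neg (by omega), if_neg hgt.not_ge]
    ring

lemma qHermite_eq_sum_qHermiteCoeff (q s x : ℝ) {n N : ℕ} (hN : n / 2 < N) :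
    qHermite q s n x = ∑ k ∈ range N, qHermiteCoeff q s n k * x ^ (n - 2 * k) := by
  refine sum_subset_zero_on_sdiff (range_subset_range.mpr (by omega)) ?_ ?_
  · intro k hk
    simp only [mem_sdiff, mem_range] at hk
    simp [qHermiteCoeff, show ¬2 * k ≤ n by omega]
  · intro k hk
    simp only [mem_range] at hk
    simp [qHermiteCoeff, show 2 * k ≤ n by omega]

lemma pow_mul_pow_mul_qHermite_div (hq : q ≠ 0) (s x : ℝ) {n N : ℕ} (hN : n / 2 < N) (j : ℕ) :
    q ^ n * x ^ j * qHermite q s n (x / q) =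
      ∑ k ∈ range N, q ^ (2 * k) * qHermiteCoeff q s n k * x ^ (n + j - 2 * k) := by
  rw [qHermite_eq_sum_qHermiteCoeff q s (x / q) hN, mul_sum]
  refine sum_congr rfl fun k _ => ?_
  by_cases hk : 2 * k ≤ n
  · obtain ⟨d, rfl⟩ := Nat.exists_eq_add_of_le hk
    rw [Nat.add_sub_cancel_left, add_assoc, Nat.add_sub_cancel_left, div_pow, pow_add, pow_add]
    field_simp
  · simp [qHermiteCoeff, hk]

lemma sum_qHermiteCoeff_succ_succ (hq : ∀ n, qnat q (n + 1) ≠ 0) (s x : ℝ) (m N : ℕ) :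
    ∑ k ∈ range (N + 1), qHermiteCoeff q s (m + 2) k * x ^ (m + 2 - 2 * k) =
      ∑ k ∈ range (N + 1), q ^ (2 * k) * qHermiteCoeff q s (m + 1) k * x ^ (m + 2 - 2 * k)
        - q * qnat q (m + 1) * s *
          ∑ k ∈ range N, q ^ (2 * k) * qHermiteCoeff q s m k * x ^ (m - 2 * k) := by
  rw [sum_range_succ', sum_range_succ', mul_sum, add_sub_right_comm, ← sum_sub_distrib]
  congr 1
  · refine sum_congr rfl fun k _ => ?_
    rw [qHermiteCoeff_succ_succ hq, show m + 2 - 2 * (k + 1) = m - 2 * k by omega]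
    ring
  · simp [qHermiteCoeff_zero_right hq]

end

theorem qHermite_alt_recurrence (q : ℝ) (hq : 0 < q) (hq1 : q < 1) (s x : ℝ) (n : ℕ) :
    qHermite q s (n + 1) x =
      q ^ n * x * qHermite q s n (x / q)
        - q ^ n * qnat q n * s * qHermite q s (n - 1) (x / q) := by
  have hqnat : ∀ n, qnat q (n + 1) ≠ 0 := fun n => (qnat_succ_pos hq.le hq1 n).ne'
  cases n with
  | zero => simp [qHermite, qbinom_zero_right hqnat, qdf_zero, qnat_zero]
  | succ m =>
    have hL := qHermite_eq_sum_qHermiteCoeff q s x (n := m + 2) (N := m / 2 + 2) (by omega)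
    have h1 := pow_mul_pow_mul_qHermite_div hq.ne' s x (n := m + 1) (N := m / 2 + 2) (by omega) 1
    have h0 := pow_mul_pow_mul_qHermite_div hq.ne' s x (n := m) (N := m / 2 + 1) (by omega) 0
    rw [add_zero] at h0
    rw [Nat.add_sub_cancel, hL, sum_qHermiteCoeff_succ_succ hqnat, ← h1, ← h0]
    ring
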